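/- arXiv:1912.08993 — 2 statements merged into one kernel-verified Lean document; each statement's English description precedes it below -/
import Mathlib

section
/- Identifiability implies full-rank union: if ξ and ξ⋆ are such that X_ξ has full column rank, (I − P_γ)X_{ξ⋆} ≠ 0 for every γ ⊆ {1,…,p} of size |γ| ≤ t that does not contain ξ⋆, and |ξ ∪ ξ⋆| ≤ t, then X_{ξ∪ξ⋆} has full column rank provided X_{ξ⋆} has full column rank. Consequently MUEV(t) ≥ MNEV(t), where MNEV(t) is the minimum over |ξ| ≤ t of the minimum non-zero eigenvalue of X_ξᵀX_ξ/n. -/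
open Matrix Finset

/-- Columns of `X` indexed by a subset `ξ`. -/
noncomputable def cols {n p : ℕ} (X : Matrix (Fin n) (Fin p) ℝ) (ξ : Finset (Fin p)) :
    Matrix (Fin n) {j // j ∈ ξ} ℝ := fun i j => X i j.val

/-- Gram matrix of the columns indexed by `ξ`. -/
noncomputable def gram {n p : ℕ} (X : Matrix (Fin n) (Fin p) ℝ) (ξ : Finset (Fin p)) :
    Matrix {j // j ∈ ξ} {j // j ∈ ξ} ℝ := (cols X ξ)ᵀ * cols X ξ

/-- Column span of the columns of `X` indexed by `γ`. -/
noncomputable def colSpan {n p : ℕ} (X : Matrix (Fin n) (Fin p) ℝ) (γ : Finset (Fin p)) :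
    Submodule ℝ (Fin n → ℝ) :=
  Submodule.span ℝ {c | ∃ j ∈ γ, c = fun i => X i j}

/-- `P` is the orthogonal projection matrix onto the column space of `X_γ`. -/
def IsProjOnto {n p : ℕ} (X : Matrix (Fin n) (Fin p) ℝ) (γ : Finset (Fin p))
    (P : Matrix (Fin n) (Fin n) ℝ) : Prop :=
  P.IsSymm ∧ (∀ v, P.mulVec v ∈ colSpan X γ) ∧ (∀ v ∈ colSpan X γ, P.mulVec v = v)

/-- Smallest eigenvalue of a (symmetric) matrix. -/
noncomputable def lamMin {ι : Type*} [Fintype ι] (A : Matrix ι ι ℝ) : ℝ :=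
  sInf {r : ℝ | ∃ v : ι → ℝ, v ≠ 0 ∧ A.mulVec v = r • v}

/-- Smallest non-zero eigenvalue of a (symmetric) matrix. -/
noncomputable def lamMinNZ {ι : Type*} [Fintype ι] (A : Matrix ι ι ℝ) : ℝ :=
  sInf {r : ℝ | r ≠ 0 ∧ ∃ v : ι → ℝ, v ≠ 0 ∧ A.mulVec v = r • v}

/-! If `X_{ξ ∪ ξ⋆}` were rank deficient, extend the independent columns of `ξ` to a maximal
independent subfamily of `ξ ∪ ξ⋆`; a column `j ∈ ξ⋆` left out would lie in the span of the columns
of `(ξ ∪ ξ⋆) \ {j}`, so the projection onto that span fixes all of `X_{ξ⋆}`, contradicting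
identifiability. Hence every Gram matrix in the definition of MUEV(t) is nonsingular, its least
eigenvalue is its least nonzero one, and it occurs among those defining MNEV(t), which are all
nonnegative. -/

theorem exists_isProjOnto {n p : ℕ} (X : Matrix (Fin n) (Fin p) ℝ) (γ : Finset (Fin p)) :
    ∃ P, IsProjOnto X γ P := by
  let K : Submodule ℝ (EuclideanSpace ℝ (Fin n)) :=
    (colSpan X γ).comap (WithLp.linearEquiv 2 ℝ (Fin n → ℝ)).toLinearMap
  let P := Matrix.toEuclideanLin.symm K.starProjection.toLinearMap
  have hPK : Matrix.toEuclideanLin P = K.starProjection := LinearEquiv.apply_symm_apply _ _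
  have hP : ∀ v, P *ᵥ v = WithLp.ofLp (K.starProjection (WithLp.toLp 2 v)) := fun v => by
    rw [← ContinuousLinearMap.coe_coe, ← hPK]; rfl
  refine ⟨P, ?_, fun v => hP v ▸ K.starProjection_apply_mem _, fun v hv => ?_⟩
  · rw [← Matrix.isHermitian_iff_isSymm, ← Matrix.isSymmetric_toEuclideanLin_iff, hPK]
    exact K.starProjection_isSymmetric
  · rw [hP, K.starProjection_eq_self_iff.mpr hv]

theorem IsProjOnto.mulVec_eq_self_iff {n p : ℕ} {X : Matrix (Fin n) (Fin p) ℝ}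
    {γ : Finset (Fin p)} {P : Matrix (Fin n) (Fin n) ℝ} (hP : IsProjOnto X γ P)
    {v : Fin n → ℝ} : P *ᵥ v = v ↔ v ∈ colSpan X γ :=
  ⟨fun h => h ▸ hP.2.1 v, hP.2.2 v⟩

theorem colSpan_eq_span_image_col {n p : ℕ} (X : Matrix (Fin n) (Fin p) ℝ)
    (γ : Finset (Fin p)) : colSpan X γ = Submodule.span ℝ (X.col '' γ) := by
  simp only [colSpan, Set.image, mem_coe, eq_comm]
  rfl

theorem rank_cols_eq_card_iff {n p : ℕ} (X : Matrix (Fin n) (Fin p) ℝ) (γ : Finset (Fin p)) :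
    (cols X γ).rank = γ.card ↔ LinearIndepOn ℝ X.col (γ : Set (Fin p)) := by
  rw [rank_eq_finrank_span_cols, ← Fintype.card_coe, eq_comm]
  exact linearIndependent_iff_card_eq_finrank_span.symm

theorem LinearIndepOn.union_of_notMem_span {K V ι : Type*} [DivisionRing K] [AddCommGroup V]
    [Module K V] {f : ι → V} {s t : Set ι} (hs : LinearIndepOn K f s)
    (ht : ∀ j ∈ t, f j ∉ Submodule.span K (f '' ((s ∪ t) \ {j}))) :
    LinearIndepOn K f (s ∪ t) := by
  obtain ⟨b, hb, hsb, hspan, hbind⟩ := exists_linearIndepOn_extension hs Set.subset_union_left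
  suffices s ∪ t ⊆ b from hbind.mono this
  intro j hj
  by_contra hjb
  have hjt : j ∈ t := hj.resolve_left fun hjs => hjb (hsb hjs)
  refine ht j hjt (Submodule.span_mono (Set.image_mono ?_) (hspan ⟨j, hj, rfl⟩))
  exact fun i hi => ⟨hb hi, fun h => hjb (h ▸ hi)⟩

def Identifiable {n p : ℕ} (X : Matrix (Fin n) (Fin p) ℝ) (ξstar : Finset (Fin p)) (t : ℕ) :
    Prop :=
  ∀ γ : Finset (Fin p), γ.card ≤ t → ¬ ξstar ⊆ γ →
    ∀ P : Matrix (Fin n) (Fin n) ℝ, IsProjOnto X γ P →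
      ∃ j ∈ ξstar, P.mulVec (fun i => X i j) ≠ (fun i => X i j)

namespace Identifiable

variable {n p t : ℕ} {X : Matrix (Fin n) (Fin p) ℝ} {ξstar : Finset (Fin p)}

theorem col_notMem_colSpan_erase (h : Identifiable X ξstar t) {U : Finset (Fin p)}
    (hU : U.card ≤ t) (hξU : ξstar ⊆ U) {j : Fin p} (hj : j ∈ ξstar) :
    X.col j ∉ colSpan X (U.erase j) := by
  obtain ⟨P, hP⟩ := exists_isProjOnto X (U.erase j)
  obtain ⟨k, hk, hPk⟩ := h (U.erase j) (card_erase_le.trans hU)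
    (fun hsub => notMem_erase j U (hsub hj)) P hP
  rw [Ne, hP.mulVec_eq_self_iff] at hPk
  obtain rfl : k = j := by
    by_contra hkj
    exact hPk (Submodule.subset_span ⟨k, mem_erase.mpr ⟨hkj, hξU hk⟩, rfl⟩)
  exact hPk

theorem rank_cols_union (h : Identifiable X ξstar t) {ξ : Finset (Fin p)}
    (hξ : (cols X ξ).rank = ξ.card) (hcard : (ξ ∪ ξstar).card ≤ t) :
    (cols X (ξ ∪ ξstar)).rank = (ξ ∪ ξstar).card := by
  rw [rank_cols_eq_card_iff] at hξ ⊢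
  rw [coe_union]
  refine hξ.union_of_notMem_span fun j hj => ?_
  have hj := h.col_notMem_colSpan_erase hcard subset_union_right hj
  rwa [colSpan_eq_span_image_col, coe_erase, coe_union] at hj

end Identifiable

section Spectrum

variable {m ι : Type*} [Fintype m] [Fintype ι]

theorem eigenvalue_mul_dotProduct_self (A : Matrix m ι ℝ) {c r : ℝ} {v : ι → ℝ}
    (hv : (c • (Aᵀ * A)) *ᵥ v = r • v) : r * (v ⬝ᵥ v) = c * (A *ᵥ v ⬝ᵥ A *ᵥ v) := by
  have h := congrArg (v ⬝ᵥ ·) hv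
  simp only [smul_mulVec, dotProduct_smul, smul_eq_mul] at h
  rw [← mulVec_mulVec, dotProduct_mulVec, vecMul_transpose] at h
  exact h.symm

theorem lamMinNZ_smul_transpose_mul_self_nonneg (A : Matrix m ι ℝ) {c : ℝ} (hc : 0 ≤ c) :
    0 ≤ lamMinNZ (c • (Aᵀ * A)) := by
  refine Real.sInf_nonneg fun r ⟨_, v, hv0, hv⟩ => ?_
  have hvv : 0 < v ⬝ᵥ v := by simpa using dotProduct_self_star_pos_iff.mpr hv0
  have hAv : 0 ≤ A *ᵥ v ⬝ᵥ A *ᵥ v := by simpa using dotProduct_self_star_nonneg (A *ᵥ v)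
  have h := eigenvalue_mul_dotProduct_self A hv
  exact nonneg_of_mul_nonneg_left (h ▸ mul_nonneg hc hAv) hvv

theorem lamMin_eq_lamMinNZ_of_injective {n : ℕ} (A : Matrix (Fin n) ι ℝ)
    (hA : Function.Injective A.mulVec) :
    lamMin ((n : ℝ)⁻¹ • (Aᵀ * A)) = lamMinNZ ((n : ℝ)⁻¹ • (Aᵀ * A)) := by
  unfold lamMin lamMinNZ
  congr 1
  ext r
  refine ⟨fun ⟨v, hv0, hv⟩ => ⟨?_, v, hv0, hv⟩, fun h => h.2⟩
  rintro rfl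
  have h := eigenvalue_mul_dotProduct_self A hv
  have hAv : A *ᵥ v = 0 := by
    -- for `n = 0` the factor `n⁻¹` is `0`, but then `A *ᵥ v` lives in the zero space
    rcases Nat.eq_zero_or_pos n with rfl | hn
    · exact Subsingleton.elim _ _
    · simpa [hn.ne'] using h.symm
  exact hv0 (hA (hAv.trans (mulVec_zero A).symm))

end Spectrum

theorem identifiability_full_rank_union_and_muev_ge_mnev_general {n p : ℕ}
    (X : Matrix (Fin n) (Fin p) ℝ) (ξstar ξ : Finset (Fin p)) (t : ℕ)
    (hfull : (cols X ξ).rank = ξ.card)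
    (hident : ∀ γ : Finset (Fin p), γ.card ≤ t → ¬ ξstar ⊆ γ →
      ∀ P : Matrix (Fin n) (Fin n) ℝ, IsProjOnto X γ P →
        ∃ j ∈ ξstar, P.mulVec (fun i => X i j) ≠ (fun i => X i j))
    (hcard : (ξ ∪ ξstar).card ≤ t) :
    (cols X (ξ ∪ ξstar)).rank = (ξ ∪ ξstar).card ∧
    sInf {r : ℝ | ∃ γ : Finset (Fin p), γ.card ≤ t ∧
        r = lamMinNZ (((n : ℝ))⁻¹ • gram X γ)} ≤
      sInf {r : ℝ | ∃ γ : Finset (Fin p), (cols X γ).rank = γ.card ∧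
        (γ ∪ ξstar).card ≤ t ∧ r = lamMin (((n : ℝ))⁻¹ • gram X (γ ∪ ξstar))} := by
  have hid : Identifiable X ξstar t := hident
  refine ⟨hid.rank_cols_union hfull hcard, csInf_le_csInf ?_ ⟨_, ξ, hfull, hcard, rfl⟩ ?_⟩
  · refine ⟨0, ?_⟩
    rintro _ ⟨γ, -, rfl⟩
    exact lamMinNZ_smul_transpose_mul_self_nonneg _ (by positivity)
  · rintro _ ⟨γ, hγ, hγcard, rfl⟩
    have hunion := (rank_cols_eq_card_iff X _).mp (hid.rank_cols_union hγ hγcard)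
    exact ⟨γ ∪ ξstar, hγcard,
      lamMin_eq_lamMinNZ_of_injective _ (mulVec_injective_iff.mpr hunion)⟩

/-- Identifiability implies that unions with the true model are full rank, and
consequently MUEV(t) ≥ MNEV(t). -/
theorem identifiability_full_rank_union_and_muev_ge_mnev {n p : ℕ}
    (X : Matrix (Fin n) (Fin p) ℝ) (ξstar ξ : Finset (Fin p)) (t : ℕ)
    (hfullstar : (cols X ξstar).rank = ξstar.card)
    (hfull : (cols X ξ).rank = ξ.card)
    (hident : ∀ γ : Finset (Fin p), γ.card ≤ t → ¬ ξstar ⊆ γ →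
      ∀ P : Matrix (Fin n) (Fin n) ℝ, IsProjOnto X γ P →
        ∃ j ∈ ξstar, P.mulVec (fun i => X i j) ≠ (fun i => X i j))
    (hcard : (ξ ∪ ξstar).card ≤ t) :
    (cols X (ξ ∪ ξstar)).rank = (ξ ∪ ξstar).card ∧
    sInf {r : ℝ | ∃ γ : Finset (Fin p), γ.card ≤ t ∧
        r = lamMinNZ (((n : ℝ))⁻¹ • gram X γ)} ≤
      sInf {r : ℝ | ∃ γ : Finset (Fin p), (cols X γ).rank = γ.card ∧
        (γ ∪ ξstar).card ≤ t ∧ r = lamMin (((n : ℝ))⁻¹ • gram X (γ ∪ ξstar))} :=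
  identifiability_full_rank_union_and_muev_ge_mnev_general X ξstar ξ t hfull hident hcard
end

section
/- Signal separation via Schur complement: for a design matrix X and full-rank models ξ ⊉ ξ⋆, if λ_min(X_{ξ∪ξ⋆}ᵀX_{ξ∪ξ⋆}) ≥ nλ > 0, then ‖(P_{ξ∪ξ⋆} − P_ξ)X_{ξ⋆}β⋆_{ξ⋆}‖² ≥ nλ‖β⋆_{ξ⋆∖ξ}‖² ≥ nλ·|ξ⋆∖ξ|·min_{j∈ξ⋆}|β⋆_j|². -/
open Matrix Finset

/-!
Since `X β⋆` lies in the column space of `X_{ξ∪ξ⋆}` and `P_ξ X β⋆ = X a` for some `a` supported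
on `ξ`, the residual `(P_{ξ∪ξ⋆} − P_ξ) X β⋆` equals `X_{ξ∪ξ⋆} c` with `c = β⋆ − a`, and `c` agrees
with `β⋆` on `ξ⋆ ∖ ξ`. Its squared norm is `cᵀ G c ≥ λ_min(G) ‖c‖² ≥ λ_min(G) ‖β⋆_{ξ⋆∖ξ}‖²`
for the Gram matrix `G` of `X_{ξ∪ξ⋆}`; this is the variational form of the Schur complement bound.
The Rayleigh bound `λ_min(A) ‖x‖² ≤ xᵀ A x` holds because `λ_min(A) • 1 ≤ A` in the Loewner order,
every point of the spectrum being at least `λ_min(A)`.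
-/

open scoped MatrixOrder

lemma setOf_mulVec_eq_smul_eq_spectrum {ι : Type*} [Fintype ι] [DecidableEq ι]
    (A : Matrix ι ι ℝ) :
    {r : ℝ | ∃ v : ι → ℝ, v ≠ 0 ∧ A *ᵥ v = r • v} = spectrum ℝ A := by
  ext r
  rw [Set.mem_ofPred_eq, ← spectrum_toLin', ← Module.End.hasEigenvalue_iff_mem_spectrum,
    Module.End.hasEigenvalue_iff, Submodule.ne_bot_iff]
  simp only [Module.End.mem_eigenspace_iff, toLin'_apply]
  exact exists_congr fun v => and_comm

lemma lamMin_mul_dotProduct_self_le {ι : Type*} [Fintype ι] [DecidableEq ι] {A : Matrix ι ι ℝ}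
    (hA : A.IsHermitian) (x : ι → ℝ) : lamMin A * (x ⬝ᵥ x) ≤ x ⬝ᵥ A *ᵥ x := by
  have hle : algebraMap ℝ (Matrix ι ι ℝ) (lamMin A) ≤ A := by
    rw [algebraMap_le_iff_le_spectrum (ha := hA)]
    intro r hr
    rw [lamMin, setOf_mulVec_eq_smul_eq_spectrum]
    exact csInf_le (finite_real_spectrum (A := A)).bddBelow hr
  have := (le_iff.1 hle).dotProduct_mulVec_nonneg x
  rwa [star_trivial, sub_mulVec, dotProduct_sub, Algebra.algebraMap_eq_smul_one, smul_mulVec,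
    one_mulVec, dotProduct_smul, smul_eq_mul, sub_nonneg] at this

lemma lamMin_nonneg {ι : Type*} [Fintype ι] [DecidableEq ι] {A : Matrix ι ι ℝ}
    (hA : A.PosSemidef) : 0 ≤ lamMin A := by
  refine Real.sInf_nonneg fun r hr => ?_
  rw [setOf_mulVec_eq_smul_eq_spectrum] at hr
  exact spectrum_nonneg_of_nonneg (nonneg_iff_posSemidef.2 hA) hr

section ColumnSpace

variable {n p : ℕ} (X : Matrix (Fin n) (Fin p) ℝ) {γ : Finset (Fin p)}

lemma mulVec_eq_sum_smul_col {b : Fin p → ℝ} (hb : ∀ j ∉ γ, b j = 0) :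
    X *ᵥ b = ∑ j ∈ γ, b j • fun i => X i j := by
  ext i
  simp only [mulVec, dotProduct, Finset.sum_apply, Pi.smul_apply, smul_eq_mul, mul_comm (b _)]
  exact (Finset.sum_subset (Finset.subset_univ γ) fun j _ hj => by simp [hb j hj]).symm

lemma mem_colSpan_iff {v : Fin n → ℝ} :
    v ∈ colSpan X γ ↔ ∃ b : Fin p → ℝ, (∀ j ∉ γ, b j = 0) ∧ X *ᵥ b = v := by
  constructor
  · intro hv
    induction hv using Submodule.span_induction with
    | mem v hv =>
      obtain ⟨j, hj, rfl⟩ := hv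
      exact ⟨Pi.single j 1, fun k hk => Pi.single_eq_of_ne (by rintro rfl; exact hk hj) _,
        by ext i; simp⟩
    | zero => exact ⟨0, fun _ _ => rfl, mulVec_zero X⟩
    | add v w _ _ hv hw =>
      obtain ⟨b, hb, rfl⟩ := hv
      obtain ⟨c, hc, rfl⟩ := hw
      exact ⟨b + c, fun j hj => by simp [hb j hj, hc j hj], mulVec_add X b c⟩
    | smul r v _ hv =>
      obtain ⟨b, hb, rfl⟩ := hv
      exact ⟨r • b, fun j hj => by simp [hb j hj], mulVec_smul X r b⟩
  · rintro ⟨b, hb, rfl⟩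
    rw [mulVec_eq_sum_smul_col X hb]
    exact Submodule.sum_mem _ fun j hj =>
      Submodule.smul_mem _ _ (Submodule.subset_span ⟨j, hj, rfl⟩)

lemma cols_mulVec_restrict {b : Fin p → ℝ} (hb : ∀ j ∉ γ, b j = 0) :
    cols X γ *ᵥ (fun j => b j) = X *ᵥ b := by
  rw [mulVec_eq_sum_smul_col X hb]
  ext i
  simp only [mulVec, dotProduct, cols, Finset.sum_apply, Pi.smul_apply, smul_eq_mul,
    mul_comm (b _)]
  exact Finset.sum_coe_sort γ fun j => X i j * b j

lemma posSemidef_gram (γ : Finset (Fin p)) : (gram X γ).PosSemidef := by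
  simpa [_root_.gram] using posSemidef_conjTranspose_mul_self (cols X γ)

lemma lamMin_gram_mul_sum_sq_le {b : Fin p → ℝ} (hb : ∀ j ∉ γ, b j = 0) :
    lamMin (gram X γ) * ∑ j ∈ γ, b j ^ 2 ≤ ∑ i, (X *ᵥ b) i ^ 2 := by
  set c : {j // j ∈ γ} → ℝ := fun j => b j
  calc lamMin (gram X γ) * ∑ j ∈ γ, b j ^ 2 = lamMin (gram X γ) * (c ⬝ᵥ c) := by
        simp only [dotProduct, ← sq, c]; rw [Finset.sum_coe_sort γ fun j => b j ^ 2]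
    _ ≤ c ⬝ᵥ gram X γ *ᵥ c := lamMin_mul_dotProduct_self_le (posSemidef_gram X γ).isHermitian c
    _ = (X *ᵥ b) ⬝ᵥ (X *ᵥ b) := by
        rw [← cols_mulVec_restrict X hb, _root_.gram, ← mulVec_mulVec, dotProduct_mulVec,
          vecMul_transpose]
    _ = ∑ i, (X *ᵥ b) i ^ 2 := by simp only [dotProduct, sq]

end ColumnSpace

lemma lamMin_gram_mul_sum_sq_sdiff_le {n p : ℕ} (X : Matrix (Fin n) (Fin p) ℝ)
    {ξstar ξ : Finset (Fin p)} {βstar : Fin p → ℝ} (hsupp : ∀ j ∉ ξstar, βstar j = 0)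
    {Pu Pξ : Matrix (Fin n) (Fin n) ℝ} (hPu : IsProjOnto X (ξ ∪ ξstar) Pu)
    (hPξ : IsProjOnto X ξ Pξ) :
    lamMin (gram X (ξ ∪ ξstar)) * ∑ j ∈ ξstar \ ξ, βstar j ^ 2 ≤
      ∑ i, ((Pu - Pξ) *ᵥ (X *ᵥ βstar)) i ^ 2 := by
  obtain ⟨a, ha, hXa⟩ := (mem_colSpan_iff X).1 (hPξ.2.1 (X *ᵥ βstar))
  have hy : X *ᵥ βstar ∈ colSpan X (ξ ∪ ξstar) :=
    (mem_colSpan_iff X).2 ⟨βstar, fun j hj => hsupp j (by simp_all), rfl⟩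
  have hres : (Pu - Pξ) *ᵥ (X *ᵥ βstar) = X *ᵥ (βstar - a) := by
    rw [sub_mulVec, hPu.2.2 _ hy, ← hXa, mulVec_sub]
  have hc : ∀ j ∉ ξ ∪ ξstar, (βstar - a) j = 0 := fun j hj => by
    simp only [Finset.mem_union, not_or] at hj
    simp [hsupp j hj.2, ha j hj.1]
  have hsum : ∑ j ∈ ξstar \ ξ, βstar j ^ 2 ≤ ∑ j ∈ ξ ∪ ξstar, (βstar - a) j ^ 2 := by
    calc ∑ j ∈ ξstar \ ξ, βstar j ^ 2 = ∑ j ∈ ξstar \ ξ, (βstar - a) j ^ 2 :=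
          Finset.sum_congr rfl fun j hj => by simp [ha j (Finset.mem_sdiff.1 hj).2]
      _ ≤ ∑ j ∈ ξ ∪ ξstar, (βstar - a) j ^ 2 :=
          Finset.sum_le_sum_of_subset_of_nonneg (fun j hj => by simp_all)
            fun _ _ _ => sq_nonneg _
  calc lamMin (gram X (ξ ∪ ξstar)) * ∑ j ∈ ξstar \ ξ, βstar j ^ 2
      ≤ lamMin (gram X (ξ ∪ ξstar)) * ∑ j ∈ ξ ∪ ξstar, (βstar - a) j ^ 2 :=
        mul_le_mul_of_nonneg_left hsum (lamMin_nonneg (posSemidef_gram X _))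
    _ ≤ ∑ i, (X *ᵥ (βstar - a)) i ^ 2 := lamMin_gram_mul_sum_sq_le X hc
    _ = ∑ i, ((Pu - Pξ) *ᵥ (X *ᵥ βstar)) i ^ 2 := by rw [hres]

lemma card_mul_iInf_abs_sq_le_sum_sq {ι : Type*} {s t : Finset ι} (hst : s ⊆ t) (f : ι → ℝ) :
    (s.card : ℝ) * (⨅ j : t, |f j|) ^ 2 ≤ ∑ j ∈ s, f j ^ 2 := by
  have hm : 0 ≤ ⨅ j : t, |f j| := Real.iInf_nonneg fun _ => abs_nonneg _
  rw [← nsmul_eq_mul, ← Finset.sum_const]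
  refine Finset.sum_le_sum fun j hj => ?_
  rw [← sq_abs (f j)]
  exact pow_le_pow_left₀ hm (ciInf_le (Set.finite_range _).bddBelow ⟨j, hst hj⟩) 2

theorem signal_separation_general {n p : ℕ} (X : Matrix (Fin n) (Fin p) ℝ)
    (ξstar ξ : Finset (Fin p)) (βstar : Fin p → ℝ) (lam : ℝ)
    (hsupp : ∀ j ∉ ξstar, βstar j = 0)
    (hlam : 0 < lam)
    (heig : (n : ℝ) * lam ≤ lamMin (gram X (ξ ∪ ξstar)))
    (Pu Pξ : Matrix (Fin n) (Fin n) ℝ)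
    (hPu : IsProjOnto X (ξ ∪ ξstar) Pu) (hPξ : IsProjOnto X ξ Pξ) :
    (n : ℝ) * lam * ∑ j ∈ ξstar \ ξ, (βstar j) ^ 2 ≤
        ∑ i, ((Pu - Pξ).mulVec (X.mulVec βstar) i) ^ 2 ∧
    (n : ℝ) * lam * ((ξstar \ ξ).card : ℝ) * (⨅ j : {j // j ∈ ξstar}, |βstar j.val|) ^ 2 ≤
        (n : ℝ) * lam * ∑ j ∈ ξstar \ ξ, (βstar j) ^ 2 := by
  have hnlam : 0 ≤ (n : ℝ) * lam := by positivity
  constructor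
  · calc (n : ℝ) * lam * ∑ j ∈ ξstar \ ξ, βstar j ^ 2
        ≤ lamMin (gram X (ξ ∪ ξstar)) * ∑ j ∈ ξstar \ ξ, βstar j ^ 2 :=
          mul_le_mul_of_nonneg_right heig (Finset.sum_nonneg fun _ _ => sq_nonneg _)
      _ ≤ _ := lamMin_gram_mul_sum_sq_sdiff_le X hsupp hPu hPξ
  · rw [mul_assoc]
    exact mul_le_mul_of_nonneg_left
      (card_mul_iInf_abs_sq_le_sum_sq Finset.sdiff_subset βstar) hnlam

/-- Signal separation via the Schur complement:
`‖(P_{ξ∪ξ⋆} − P_ξ)X_{ξ⋆}β⋆_{ξ⋆}‖² ≥ nλ‖β⋆_{ξ⋆∖ξ}‖² ≥ nλ·|ξ⋆∖ξ|·min_{j∈ξ⋆}|β⋆_j|²`. -/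
theorem signal_separation {n p : ℕ} (X : Matrix (Fin n) (Fin p) ℝ)
    (ξstar ξ : Finset (Fin p)) (βstar : Fin p → ℝ) (lam : ℝ)
    (hξstar_ne : ξstar.Nonempty)
    (hsupp : ∀ j ∉ ξstar, βstar j = 0)
    (hnotsub : ¬ ξstar ⊆ ξ)
    (hfull : (cols X ξ).rank = ξ.card)
    (hlam : 0 < lam)
    (heig : (n : ℝ) * lam ≤ lamMin (gram X (ξ ∪ ξstar)))
    (Pu Pξ : Matrix (Fin n) (Fin n) ℝ)
    (hPu : IsProjOnto X (ξ ∪ ξstar) Pu) (hPξ : IsProjOnto X ξ Pξ) :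
    (n : ℝ) * lam * ∑ j ∈ ξstar \ ξ, (βstar j) ^ 2 ≤
        ∑ i, ((Pu - Pξ).mulVec (X.mulVec βstar) i) ^ 2 ∧
    (n : ℝ) * lam * ((ξstar \ ξ).card : ℝ) * (⨅ j : {j // j ∈ ξstar}, |βstar j.val|) ^ 2 ≤
        (n : ℝ) * lam * ∑ j ∈ ξstar \ ξ, (βstar j) ^ 2 :=
  signal_separation_general X ξstar ξ βstar lam hsupp hlam heig Pu Pξ hPu hPξ
end
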